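/- Let i ≥ 1 and p, q ∈ ℤ. Then ∂_i(c^{-i}_p · c^i_q) = c^{-i+1}_{p-1} · c^{i+1}_q + c^{-i+1}_p · c^{i+1}_{q-1}. -/

import Mathlib

/-!
The polynomial ring `R2 = ℚ[c₁, c₂, …, t₁, t₂, …]`: the variable `Sum.inl p` (for `p ≥ 1`)
is `c_p`, and `Sum.inr i` (for `i ≥ 1`) is `t_i`.
-/

noncomputable section
open MvPolynomial Finset
open scoped Classical

abbrev R2 : Type := MvPolynomial (ℕ ⊕ ℕ) ℚ

/-- The variable `t_i`. -/
def Tv (i : ℕ) : R2 := X (Sum.inr i)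

/-- `c_p`, with the conventions `c_0 = 1` and `c_p = 0` for `p < 0`. -/
def Cv (p : ℤ) : R2 := if p < 0 then 0 else if p = 0 then 1 else X (Sum.inl p.toNat)

/-- The complete homogeneous symmetric polynomial `h_j` evaluated on a list. -/
def hfun : List R2 → ℕ → R2
  | [], j => if j = 0 then 1 else 0
  | a :: L, j => ∑ i ∈ Finset.range (j + 1), a ^ i * hfun L (j - i)

/-- The elementary symmetric polynomial `e_j` evaluated on a list. -/
def efun : List R2 → ℕ → R2
  | [], j => if j = 0 then 1 else 0
  | _ :: _, 0 => 1
  | a :: L, j + 1 => efun L (j + 1) + a * efun L j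

/-- The list `(-t_1, …, -t_r)`. -/
def negT (r : ℕ) : List R2 := (List.range r).map fun i => -Tv (i + 1)

/-- `h^r_j(-t)`: complete homogeneous for `r ≥ 0`, elementary `e^{-r}_j(-t)` for `r < 0`. -/
def hmt (r : ℤ) (j : ℕ) : R2 :=
  if 0 ≤ r then hfun (negT r.toNat) j else efun (negT (-r).toNat) j

/-- `c^r_p := Σ_{j=0}^p c_{p-j} h^r_j(-t)`. -/
def cc (r p : ℤ) : R2 := ∑ j ∈ Finset.range (p.toNat + 1), Cv (p - j) * hmt r j

/-- `a^s_p := (1/2)c_p + Σ_{j=1}^p c_{p-j} h^s_j(-t)`. -/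
def aa (s p : ℤ) : R2 :=
  C (1/2 : ℚ) * Cv p + ∑ j ∈ Finset.Icc 1 p.toNat, Cv (p - j) * hmt s j

/-- Images of the variables under the automorphism `s_i`. -/
def sImg : ℕ → ℕ ⊕ ℕ → R2
  | 0, Sum.inr j => if j = 1 then -Tv 2 else if j = 2 then -Tv 1 else Tv j
  | 0, Sum.inl p =>
      if p = 0 then X (Sum.inl 0)
      else Cv p - 2 * (Tv 1 + Tv 2) *
        ∑ j ∈ Finset.range p, (-1 : R2) ^ j *
          (∑ a ∈ Finset.range (j + 1), Tv 1 ^ a * Tv 2 ^ (j - a)) * Cv ((p : ℤ) - 1 - j)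
  | i + 1, Sum.inr j =>
      if j = i + 1 then Tv (i + 2) else if j = i + 2 then Tv (i + 1) else Tv j
  | _ + 1, Sum.inl p => X (Sum.inl p)

/-- The ring automorphism `s_i` of `R2`. -/
def sA (i : ℕ) : R2 →ₐ[ℚ] R2 := aeval (sImg i)

/-- The fraction field of `R2`. -/
abbrev KK : Type := FractionRing R2

/-- The canonical embedding of `R2` into its fraction field. -/
def toK : R2 →+* KK := algebraMap R2 KK

/-- The denominator `t_1 + t_2` (for `i = 0`) resp. `t_{i+1} - t_i` (for `i ≥ 1`). -/
def dden (i : ℕ) : R2 := if i = 0 then Tv 1 + Tv 2 else Tv (i + 1) - Tv i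

/-- The divided difference operator `∂_i`, with values in the fraction field. -/
def dd (i : ℕ) (f : R2) : KK := (toK f - toK (sA i f)) / toK (dden i)

/-!
Two Pieri-type recursions drive the proof: adding the variable `t_i` to the elementary and
`t_{i+1}` to the complete symmetric functions gives
`c^{-i}_p = c^{-i+1}_p - t_i c^{-i+1}_{p-1}` and `c^i_q = c^{i+1}_q + t_{i+1} c^{i+1}_{q-1}`.
The polynomials `c^{-i+1}` involve only `t_1, …, t_{i-1}` and `c^{i+1}` is symmetric in
`t_1, …, t_{i+1}`, so both are `s_i`-invariant. Hence `s_i` only exchanges `t_i` and `t_{i+1}` in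
the product `(c^{-i+1}_p - t_i c^{-i+1}_{p-1}) (c^{i+1}_q + t_{i+1} c^{i+1}_{q-1})`, and the
difference is `(t_{i+1} - t_i)` times the right-hand side.
-/

lemma hfun_zero (L : List R2) : hfun L 0 = 1 := by
  induction L with
  | nil => simp [hfun]
  | cons a L ih => simp [hfun, ih]

lemma efun_zero (L : List R2) : efun L 0 = 1 := by
  cases L <;> simp [efun]

lemma hfun_cons_succ (a : R2) (L : List R2) (j : ℕ) :
    hfun (a :: L) (j + 1) = hfun L (j + 1) + a * hfun (a :: L) j := by
  rw [hfun, hfun, sum_range_succ', mul_sum, add_comm]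
  simp only [pow_zero, one_mul, Nat.sub_zero, pow_succ, Nat.add_sub_add_right]
  congr 1
  exact sum_congr rfl fun _ _ => by ring

lemma efun_cons_cons (a b : R2) (L : List R2) (j : ℕ) :
    efun (a :: b :: L) (j + 2) = efun L (j + 2) + (a + b) * efun L (j + 1) + a * b * efun L j := by
  simp only [efun]
  ring

lemma hfun_cons_cons_comm (a b : R2) (L : List R2) (j : ℕ) :
    hfun (a :: b :: L) j = hfun (b :: a :: L) j := by
  have sub_eq (j : ℕ) :
      hfun (b :: L) (j + 1) - hfun (a :: L) (j + 1) = (b - a) * hfun (a :: b :: L) j := by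
    induction j with
    | zero => simp only [hfun_cons_succ, hfun_zero]; ring
    | succ j ih =>
      rw [hfun_cons_succ b L (j + 1), hfun_cons_succ a L (j + 1), hfun_cons_succ a (b :: L) j]
      linear_combination a * ih
  induction j with
  | zero => rw [hfun_zero, hfun_zero]
  | succ j ih =>
    rw [hfun_cons_succ a (b :: L) j, hfun_cons_succ b (a :: L) j, ih]
    linear_combination sub_eq j + (b - a) * ih

lemma efun_cons_cons_comm (a b : R2) (L : List R2) (j : ℕ) :
    efun (a :: b :: L) j = efun (b :: a :: L) j := by
  match j with
  | 0 => rw [efun_zero, efun_zero]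
  | 1 => simp only [efun, efun_zero]; ring
  | j + 2 => rw [efun_cons_cons, efun_cons_cons, add_comm b, mul_comm b]

lemma hfun_perm {L M : List R2} (h : L.Perm M) (j : ℕ) : hfun L j = hfun M j := by
  induction h generalizing j with
  | nil => rfl
  | cons a _ ih => simp only [hfun, ih]
  | swap a b L => exact hfun_cons_cons_comm b a L j
  | trans _ _ ih₁ ih₂ => exact (ih₁ j).trans (ih₂ j)

lemma efun_perm {L M : List R2} (h : L.Perm M) (j : ℕ) : efun L j = efun M j := by
  induction h generalizing j with
  | nil => rfl
  | cons a _ ih => cases j <;> simp only [efun, ih]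
  | swap a b L => exact efun_cons_cons_comm b a L j
  | trans _ _ ih₁ ih₂ => exact (ih₁ j).trans (ih₂ j)

lemma hfun_map (φ : R2 →ₐ[ℚ] R2) (L : List R2) (j : ℕ) :
    φ (hfun L j) = hfun (L.map φ) j := by
  induction L generalizing j with
  | nil => simp only [hfun, List.map_nil, apply_ite φ, map_one, map_zero]
  | cons a L ih => simp only [hfun, List.map_cons, map_sum, map_mul, map_pow, ih]

lemma efun_map (φ : R2 →ₐ[ℚ] R2) (L : List R2) (j : ℕ) :
    φ (efun L j) = efun (L.map φ) j := by
  induction L generalizing j with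
  | nil => simp only [efun, List.map_nil, apply_ite φ, map_one, map_zero]
  | cons a L ih => cases j <;> simp only [efun, List.map_cons, map_one, map_add, map_mul, ih]

lemma negT_succ (r : ℕ) : negT (r + 1) = negT r ++ [-Tv (r + 1)] := by
  simp [negT, List.range_succ]

lemma hmt_natCast (i j : ℕ) : hmt (i : ℤ) j = hfun (negT i) j := by
  simp [hmt]

lemma hmt_neg_natCast (i j : ℕ) : hmt (-(i : ℤ)) j = efun (negT i) j := by
  rcases i with _ | i
  · cases j <;> rfl
  · rw [hmt, if_neg (by omega), neg_neg, Int.toNat_natCast]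

lemma hmt_zero (r : ℤ) : hmt r 0 = 1 := by
  unfold hmt
  split
  · exact hfun_zero _
  · exact efun_zero _

lemma Cv_of_neg {p : ℤ} (h : p < 0) : Cv p = 0 := by simp [Cv, h]

lemma cc_eq_sum_range (r p : ℤ) {N : ℕ} (hN : p.toNat ≤ N) :
    cc r p = ∑ j ∈ range (N + 1), Cv (p - j) * hmt r j := by
  rw [cc, ← sum_range_add_sum_Ico _ (by omega : p.toNat + 1 ≤ N + 1), left_eq_add]
  refine sum_eq_zero fun j hj => ?_
  rw [mem_Ico] at hj
  rw [Cv_of_neg (by omega), zero_mul]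

lemma cc_eq_add_mul_of_hmt {r' r : ℤ} {x : R2}
    (h : ∀ j : ℕ, hmt r' (j + 1) = hmt r (j + 1) + x * hmt r j) (p : ℤ) :
    cc r' p = cc r p + x * cc r (p - 1) := by
  set N := (p - 1).toNat
  have hN : p.toNat ≤ N + 1 := by omega
  have step : ∀ j ∈ range (N + 1), Cv (p - (j + 1 : ℕ)) * hmt r' (j + 1) =
      Cv (p - (j + 1 : ℕ)) * hmt r (j + 1) + x * (Cv (p - 1 - j) * hmt r j) := fun j _ => by
    rw [h, show p - ((j + 1 : ℕ) : ℤ) = p - 1 - j by push_cast; ring]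
    ring
  rw [cc_eq_sum_range r' p hN, cc_eq_sum_range r p hN, cc_eq_sum_range r (p - 1) le_rfl,
    sum_range_succ' _ (N + 1), sum_range_succ' _ (N + 1), sum_congr rfl step, sum_add_distrib,
    mul_sum, hmt_zero, hmt_zero]
  ring

lemma cc_neg_natCast_succ (i : ℕ) (p : ℤ) :
    cc (-((i + 1 : ℕ) : ℤ)) p = cc (-(i : ℤ)) p - Tv (i + 1) * cc (-(i : ℤ)) (p - 1) := by
  have hrec (j : ℕ) : hmt (-((i + 1 : ℕ) : ℤ)) (j + 1) =
      hmt (-(i : ℤ)) (j + 1) + -Tv (i + 1) * hmt (-(i : ℤ)) j := by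
    rw [hmt_neg_natCast, hmt_neg_natCast, hmt_neg_natCast, negT_succ,
      efun_perm (List.perm_append_singleton _ _)]
    rfl
  rw [cc_eq_add_mul_of_hmt hrec p]
  ring

lemma cc_natCast (i : ℕ) (q : ℤ) :
    cc (i : ℤ) q = cc ((i + 1 : ℕ) : ℤ) q + Tv (i + 1) * cc ((i + 1 : ℕ) : ℤ) (q - 1) := by
  refine cc_eq_add_mul_of_hmt (fun j => ?_) q
  rw [hmt_natCast, hmt_natCast, hmt_natCast, negT_succ,
    hfun_perm (List.perm_append_singleton _ _), hfun_perm (List.perm_append_singleton _ _),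
    hfun_cons_succ]
  ring

lemma sA_Tv (m k : ℕ) : sA (m + 1) (Tv k) =
    if k = m + 1 then Tv (m + 2) else if k = m + 2 then Tv (m + 1) else Tv k := by
  simp only [sA, Tv, aeval_X, sImg]

lemma sA_Cv (m : ℕ) (p : ℤ) : sA (m + 1) (Cv p) = Cv p := by
  unfold Cv
  split_ifs
  · exact map_zero _
  · exact map_one _
  · simp [sA, sImg]

lemma negT_map_sA {m r : ℕ} (h : r ≤ m) : (negT r).map (sA (m + 1)) = negT r := by
  simp only [negT, List.map_map]
  refine List.map_congr_left fun k hk => ?_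
  rw [List.mem_range] at hk
  simp only [Function.comp, map_neg, sA_Tv, if_neg (show k + 1 ≠ m + 1 by omega),
    if_neg (show k + 1 ≠ m + 2 by omega)]

lemma negT_add_two_map_sA_perm (m : ℕ) :
    ((negT (m + 2)).map (sA (m + 1))).Perm (negT (m + 2)) := by
  rw [negT_succ, negT_succ, List.map_append, List.map_append, negT_map_sA le_rfl,
    List.append_assoc, List.append_assoc]
  simp only [List.map_cons, List.map_nil, map_neg, sA_Tv, if_true,
    if_neg (show m + 1 + 1 ≠ m + 1 by omega), List.singleton_append]
  exact (List.Perm.swap _ _ _).append_left _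

lemma sA_cc_neg_natCast (m : ℕ) (p : ℤ) : sA (m + 1) (cc (-(m : ℤ)) p) = cc (-(m : ℤ)) p := by
  simp only [cc, map_sum, map_mul, sA_Cv, hmt_neg_natCast, efun_map, negT_map_sA le_rfl]

lemma sA_cc_natCast (m : ℕ) (q : ℤ) :
    sA (m + 1) (cc ((m + 2 : ℕ) : ℤ) q) = cc ((m + 2 : ℕ) : ℤ) q := by
  simp only [cc, map_sum, map_mul, sA_Cv, hmt_natCast, hfun_map,
    hfun_perm (negT_add_two_map_sA_perm m)]

lemma dden_ne_zero (i : ℕ) : dden i ≠ 0 := by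
  intro h
  rcases i with _ | i
  · simpa [dden, Tv] using congrArg (eval fun _ => (1 : ℚ)) h
  · simpa [dden, Tv] using congrArg (eval fun v => if v = Sum.inr (i + 2) then (1 : ℚ) else 0) h

lemma dd_eq_of_sub_eq {i : ℕ} {f g : R2} (h : f - sA i f = dden i * g) : dd i f = toK g := by
  have hne : toK (dden i) ≠ 0 :=
    (map_ne_zero_iff _ (IsFractionRing.injective R2 KK)).mpr (dden_ne_zero i)
  rw [dd, ← map_sub, h, map_mul, mul_div_cancel_left₀ _ hne]

theorem statement6 (i : ℕ) (hi : 1 ≤ i) (p q : ℤ) :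
    dd i (cc (-(i : ℤ)) p * cc (i : ℤ) q) =
      toK (cc (-(i : ℤ) + 1) (p - 1) * cc ((i : ℤ) + 1) q +
        cc (-(i : ℤ) + 1) p * cc ((i : ℤ) + 1) (q - 1)) := by
  obtain ⟨m, rfl⟩ : ∃ m, i = m + 1 := ⟨i - 1, by omega⟩
  rw [show -((m + 1 : ℕ) : ℤ) + 1 = -(m : ℤ) by push_cast; ring, ← Nat.cast_succ]
  apply dd_eq_of_sub_eq
  have hti : sA (m + 1) (Tv (m + 1)) = Tv (m + 2) := by simp [sA_Tv]
  have hti' : sA (m + 1) (Tv (m + 2)) = Tv (m + 1) := by simp [sA_Tv]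
  rw [cc_neg_natCast_succ, cc_natCast (m + 1), map_mul, map_sub, map_add, map_mul, map_mul,
    hti, hti', sA_cc_neg_natCast, sA_cc_neg_natCast, sA_cc_natCast, sA_cc_natCast, dden,
    if_neg m.succ_ne_zero]
  ring
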